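/- arXiv:2211.05729 — 9 statements merged into one kernel-verified Lean document; each statement's English description precedes it below -/
import Mathlib

section
/- Let A be a symmetric positive definite matrix in R^{D×D} with eigenvalues λ_1 ≥ ... ≥ λ_D > 0, let η, ρ > 0 with η·λ_1(A) < 1, and for j ∈ [D] let P^{(j:D)} denote the orthogonal projection onto the span of eigenvectors v_j, ..., v_D. Consider the update x' = x − ηA x − η(A²x)/‖x‖ for x ≠ 0. If ‖P^{(j:D)} x‖ ≤ η·λ_j², then ‖P^{(j:D)} x'‖ ≤ η·λ_j². (The set {x : ‖P^{(j:D)} x‖ ≤ η λ_j²} is invariant.) -/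
open scoped BigOperators RealInnerProductSpace

/-- Invariance of the set `{x : ‖P^{(j:D)} x‖ ≤ η λ_j²}` under the (rescaled) SAM update
on the quadratic loss `L(x) = xᵀAx/2`. -/
theorem sam_quadratic_invariant_set {D : ℕ}
    (A : EuclideanSpace ℝ (Fin (D+1)) →L[ℝ] EuclideanSpace ℝ (Fin (D+1)))
    (lam : Fin (D+1) → ℝ) (v : Fin (D+1) → EuclideanSpace ℝ (Fin (D+1)))
    (hsymm : ∀ x y, ⟪A x, y⟫ = ⟪x, A y⟫)
    (horth : Orthonormal ℝ v)
    (heig : ∀ i, A (v i) = lam i • v i)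
    (hdesc : ∀ i j : Fin (D+1), i ≤ j → lam j ≤ lam i)
    (hpos : ∀ i, 0 < lam i)
    (η : ℝ) (hη : 0 < η) (hEtaLam : η * lam 0 < 1)
    (j : Fin (D+1)) (x : EuclideanSpace ℝ (Fin (D+1))) (hx : x ≠ 0)
    (hin : ‖∑ i ∈ Finset.univ.filter (fun i => j ≤ i), ⟪v i, x⟫ • v i‖ ≤ η * (lam j)^2) :
    ‖∑ i ∈ Finset.univ.filter (fun i => j ≤ i),
        ⟪v i, x - η • A x - (η / ‖x‖) • A (A x)⟫ • v i‖ ≤ η * (lam j)^2 := by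
  set s := Finset.univ.filter (fun i : Fin (D+1) => j ≤ i) with hs
  set c : Fin (D+1) → ℝ := fun i => ⟪v i, x⟫ with hc
  set f : Fin (D+1) → ℝ := fun i => 1 - η * lam i - η / ‖x‖ * (lam i)^2 with hf
  have hxn : (0:ℝ) < ‖x‖ := norm_pos_iff.mpr hx
  have hrhs : (0:ℝ) ≤ η * (lam j)^2 := by positivity
  -- the coefficients of the updated point
  have hcoef : ∀ i, ⟪v i, x - η • A x - (η / ‖x‖) • A (A x)⟫ = f i * c i := by
    intro i
    have h1 : ⟪v i, A x⟫ = lam i * c i := by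
      rw [← hsymm, heig, inner_smul_left]; simp [hc]
    have h2 : ⟪v i, A (A x)⟫ = lam i * (lam i * c i) := by
      rw [← hsymm, heig, inner_smul_left]
      simp only [RCLike.star_def, conj_trivial]
      rw [h1]
    rw [inner_sub_right, inner_sub_right, inner_smul_right, inner_smul_right, h1, h2]
    simp only [hf, hc]
    ring
  -- squared norms of combinations of orthonormal vectors
  have hnorm : ∀ l : Fin (D+1) → ℝ, ‖∑ i ∈ s, l i • v i‖^2 = ∑ i ∈ s, (l i)^2 := by
    intro l
    have := horth.inner_sum l l s
    rw [real_inner_self_eq_norm_sq] at this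
    simpa [sq] using this
  -- the uniform bound on |f i| for i ∈ s
  set M : ℝ := max 1 (η * (lam j)^2 / ‖x‖) with hM
  have hM0 : (0:ℝ) ≤ M := le_trans zero_le_one (le_max_left _ _)
  have hfb : ∀ i ∈ s, |f i| ≤ M := by
    intro i hi
    have hji : j ≤ i := by simpa [hs] using hi
    have hlij : lam i ≤ lam j := hdesc j i hji
    have hli0 : 0 < lam i := hpos i
    have hetai : η * lam i ≤ η * lam 0 :=
      mul_le_mul_of_nonneg_left (hdesc 0 i (Fin.zero_le i)) hη.le
    have h1 : f i ≤ M := by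
      have : f i ≤ 1 := by
        have h2 : 0 ≤ η * lam i := by positivity
        have h3 : 0 ≤ η / ‖x‖ * (lam i)^2 := by positivity
        simp only [hf]; linarith
      exact this.trans (le_max_left _ _)
    have h2 : -M ≤ f i := by
      have hsq : (lam i)^2 ≤ (lam j)^2 := by nlinarith
      have hb : η / ‖x‖ * (lam i)^2 ≤ η * (lam j)^2 / ‖x‖ := by
        rw [div_mul_eq_mul_div]
        gcongr
      have hb2 : η * (lam j)^2 / ‖x‖ ≤ M := le_max_right _ _
      have h1e : 0 ≤ 1 - η * lam i := by linarith
      simp only [hf]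
      linarith
    exact abs_le.mpr ⟨h2, h1⟩
  -- bound the squared norm
  have hsum : ∑ i ∈ s, (f i * c i)^2 ≤ M^2 * ∑ i ∈ s, (c i)^2 := by
    rw [Finset.mul_sum]
    apply Finset.sum_le_sum
    intro i hi
    have := hfb i hi
    have h2 : (f i)^2 ≤ M^2 := sq_le_sq' (neg_le_of_abs_le this) (le_of_abs_le this)
    calc (f i * c i)^2 = (f i)^2 * (c i)^2 := by ring
      _ ≤ M^2 * (c i)^2 := mul_le_mul_of_nonneg_right h2 (sq_nonneg _)
  have hfinal : ‖∑ i ∈ s, (f i * c i) • v i‖^2 ≤ (η * (lam j)^2)^2 := by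
    rw [hnorm]
    rcases le_total (η * (lam j)^2) ‖x‖ with hcase | hcase
    · -- M = 1
      have hM1 : M = 1 := by
        rw [hM, max_eq_left]
        rw [div_le_one hxn]; exact hcase
      have hPx : ∑ i ∈ s, (c i)^2 ≤ (η * (lam j)^2)^2 := by
        rw [← hnorm c]
        exact pow_le_pow_left₀ (norm_nonneg _) hin 2
      calc ∑ i ∈ s, (f i * c i)^2 ≤ M^2 * ∑ i ∈ s, (c i)^2 := hsum
        _ = ∑ i ∈ s, (c i)^2 := by rw [hM1]; ring
        _ ≤ (η * (lam j)^2)^2 := hPx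
    · -- M = η λ_j² / ‖x‖
      have hM1 : M = η * (lam j)^2 / ‖x‖ := by
        rw [hM, max_eq_right]
        rw [le_div_iff₀ hxn, one_mul]; exact hcase
      have hBessel : ∑ i ∈ s, (c i)^2 ≤ ‖x‖^2 := by
        have := horth.sum_inner_products_le (𝕜 := ℝ) x (s := s)
        simpa [hc, sq_abs] using this
      calc ∑ i ∈ s, (f i * c i)^2 ≤ M^2 * ∑ i ∈ s, (c i)^2 := hsum
        _ ≤ M^2 * ‖x‖^2 := by
            apply mul_le_mul_of_nonneg_left hBessel (sq_nonneg _)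
        _ = (η * (lam j)^2)^2 := by
            rw [hM1]; field_simp
  have heq : (∑ i ∈ s, ⟪v i, x - η • A x - (η / ‖x‖) • A (A x)⟫ • v i)
      = ∑ i ∈ s, (f i * c i) • v i := by
    apply Finset.sum_congr rfl
    intro i _
    rw [hcoef]
  rw [heq]
  have := hfinal
  nlinarith [norm_nonneg (∑ i ∈ s, (f i * c i) • v i), hrhs]
end

section
/- Let A be symmetric positive definite with eigenvalues λ_1 ≥ ... ≥ λ_D > 0, η > 0 with η·λ_1 < 1, and P^{(j:D)} the projection onto the bottom eigenvectors v_j,...,v_D. If x ≠ 0 satisfies ‖P^{(j:D)} x‖ > η λ_j² and x' = x − ηA x − η A² x/‖x‖, then ‖P^{(j:D)} x'‖ ≤ max(1 − η λ_D, η λ_j) · ‖P^{(j:D)} x‖. -/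
open scoped BigOperators RealInnerProductSpace

/-- Outside the invariant set, the bottom-eigenspace component of the (rescaled) SAM
iterate on the quadratic loss shrinks: `‖P^{(j:D)} x'‖ ≤ max(1 − η λ_D, η λ_j) ‖P^{(j:D)} x‖`. -/
theorem sam_quadratic_prepare {D : ℕ}
    (A : EuclideanSpace ℝ (Fin (D+1)) →L[ℝ] EuclideanSpace ℝ (Fin (D+1)))
    (lam : Fin (D+1) → ℝ) (v : Fin (D+1) → EuclideanSpace ℝ (Fin (D+1)))
    (hsymm : ∀ x y, ⟪A x, y⟫ = ⟪x, A y⟫)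
    (horth : Orthonormal ℝ v)
    (heig : ∀ i, A (v i) = lam i • v i)
    (hdesc : ∀ i j : Fin (D+1), i ≤ j → lam j ≤ lam i)
    (hpos : ∀ i, 0 < lam i)
    (η : ℝ) (hη : 0 < η) (hEtaLam : η * lam 0 < 1)
    (j : Fin (D+1)) (x : EuclideanSpace ℝ (Fin (D+1))) (hx : x ≠ 0)
    (hout : η * (lam j)^2 < ‖∑ i ∈ Finset.univ.filter (fun i => j ≤ i), ⟪v i, x⟫ • v i‖) :
    ‖∑ i ∈ Finset.univ.filter (fun i => j ≤ i),
        ⟪v i, x - η • A x - (η / ‖x‖) • A (A x)⟫ • v i‖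
      ≤ max (1 - η * lam (Fin.last D)) (η * lam j) *
          ‖∑ i ∈ Finset.univ.filter (fun i => j ≤ i), ⟪v i, x⟫ • v i‖ := by
  classical
  set S := Finset.univ.filter (fun i : Fin (D+1) => j ≤ i) with hS
  set c : Fin (D+1) → ℝ := fun i => ⟪v i, x⟫ with hc
  set M : ℝ := max (1 - η * lam (Fin.last D)) (η * lam j) with hM
  have hxpos : (0:ℝ) < ‖x‖ := norm_pos_iff.mpr hx
  have hAv : ∀ i, ⟪v i, A x⟫ = lam i * c i := by
    intro i
    rw [← hsymm, heig, real_inner_smul_left]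
  have hA2v : ∀ i, ⟪v i, A (A x)⟫ = lam i ^ 2 * c i := by
    intro i
    rw [← hsymm, heig, real_inner_smul_left, hAv]
    ring
  have ha : ∀ i, ⟪v i, x - η • A x - (η / ‖x‖) • A (A x)⟫
      = (1 - η * lam i - η * (lam i)^2 / ‖x‖) * c i := by
    intro i
    rw [inner_sub_right, inner_sub_right, real_inner_smul_right, real_inner_smul_right,
      hAv, hA2v, show (⟪v i, x⟫ : ℝ) = c i from rfl]
    have hne : ‖x‖ ≠ 0 := ne_of_gt hxpos
    field_simp
  -- Bessel: norm of projection ≤ norm of x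
  have hnormsq : ‖∑ i ∈ S, c i • v i‖ ^ 2 = ∑ i ∈ S, c i ^ 2 := by
    rw [← real_inner_self_eq_norm_sq, horth.inner_sum]
    simp [sq]
  have hbessel : ‖∑ i ∈ S, c i • v i‖ ≤ ‖x‖ := by
    have h1 : ‖∑ i ∈ S, c i • v i‖ ^ 2 ≤ ‖x‖ ^ 2 := by
      rw [hnormsq]
      have := horth.sum_inner_products_le (s := S) x
      simpa [Real.norm_eq_abs, sq_abs] using this
    nlinarith [norm_nonneg (∑ i ∈ S, c i • v i), norm_nonneg x]
  have hxlarge : η * (lam j)^2 < ‖x‖ := lt_of_lt_of_le hout hbessel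
  have hMnn : 0 ≤ M := by
    have h0 : lam (Fin.last D) ≤ lam 0 := hdesc 0 (Fin.last D) (Fin.zero_le _)
    have : η * lam (Fin.last D) ≤ η * lam 0 := by nlinarith
    have : 1 - η * lam (Fin.last D) ≥ 0 := by linarith
    exact le_trans this (le_max_left _ _)
  -- key coefficient bound
  have hkey : ∀ i ∈ S, |1 - η * lam i - η * (lam i)^2 / ‖x‖| ≤ M := by
    intro i hi
    have hji : j ≤ i := by simpa [hS] using hi
    have hlij : lam i ≤ lam j := hdesc j i hji
    have hli0 : lam i ≤ lam 0 := hdesc 0 i (Fin.zero_le _)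
    have hlast : lam (Fin.last D) ≤ lam i := hdesc i (Fin.last D) (Fin.le_last i)
    have hposi := hpos i
    have hposj := hpos j
    have hnn : 0 ≤ η * (lam i)^2 / ‖x‖ := by positivity
    rw [abs_le]
    constructor
    · -- lower bound: -(η λ_j) ≤ ... , -M ≤ -(η λ_j)
      have hfrac : η * (lam i)^2 / ‖x‖ ≤ 1 := by
        have h1 : η * (lam i)^2 ≤ η * (lam j)^2 := by
          nlinarith [mul_le_mul hlij hlij (le_of_lt hposi) (le_of_lt hposj)]
        have h2 : η * (lam i)^2 ≤ ‖x‖ := le_of_lt (lt_of_le_of_lt h1 hxlarge)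
        exact (div_le_one hxpos).mpr h2
      have hM2 : η * lam j ≤ M := le_max_right _ _
      have : η * lam i ≤ η * lam j := by nlinarith
      linarith
    · have hM1 : 1 - η * lam (Fin.last D) ≤ M := le_max_left _ _
      have : η * lam (Fin.last D) ≤ η * lam i := by nlinarith
      linarith
  -- finish via squares
  have hsq : ‖∑ i ∈ S, ⟪v i, x - η • A x - (η / ‖x‖) • A (A x)⟫ • v i‖ ^ 2
      ≤ (M * ‖∑ i ∈ S, c i • v i‖) ^ 2 := by
    have hL : ‖∑ i ∈ S, ⟪v i, x - η • A x - (η / ‖x‖) • A (A x)⟫ • v i‖ ^ 2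
        = ∑ i ∈ S, ((1 - η * lam i - η * (lam i)^2 / ‖x‖) * c i) ^ 2 := by
      rw [← real_inner_self_eq_norm_sq, horth.inner_sum]
      simp [ha, sq]
    rw [hL, mul_pow, hnormsq, Finset.mul_sum]
    apply Finset.sum_le_sum
    intro i hi
    have h := hkey i hi
    have : (1 - η * lam i - η * (lam i)^2 / ‖x‖)^2 ≤ M^2 := by
      have := sq_abs (1 - η * lam i - η * (lam i)^2 / ‖x‖)
      nlinarith [abs_nonneg (1 - η * lam i - η * (lam i)^2 / ‖x‖)]
    nlinarith [sq_nonneg (c i)]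
  have hrhs : 0 ≤ M * ‖∑ i ∈ S, c i • v i‖ := mul_nonneg hMnn (norm_nonneg _)
  exact (pow_le_pow_iff_left₀ (norm_nonneg _) hrhs two_ne_zero).mp hsq
end

section
/- Let A be symmetric positive definite with top eigenvalue λ_1 and unit top eigenvector v_1, and let η > 0 with η λ_1 < 1. If x ≠ 0 satisfies ‖x‖ ≤ η λ_1²/(2 − η λ_1), then the SAM-quadratic update x' = x − ηA x − η A² x/‖x‖ satisfies |⟨x', v_1⟩| ≥ |⟨x, v_1⟩|. -/
open scoped BigOperators RealInnerProductSpace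

/-- If the SAM-quadratic iterate has small norm (`‖x‖ ≤ η λ_1²/(2 − η λ_1)`), then the
component along the top eigenvector grows in absolute value after one update. -/
theorem sam_quadratic_top_component_increases {D : ℕ}
    (A : EuclideanSpace ℝ (Fin (D+1)) →L[ℝ] EuclideanSpace ℝ (Fin (D+1)))
    (lam : Fin (D+1) → ℝ) (v : Fin (D+1) → EuclideanSpace ℝ (Fin (D+1)))
    (hsymm : ∀ x y, ⟪A x, y⟫ = ⟪x, A y⟫)
    (horth : Orthonormal ℝ v)
    (heig : ∀ i, A (v i) = lam i • v i)
    (hdesc : ∀ i j : Fin (D+1), i ≤ j → lam j ≤ lam i)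
    (hpos : ∀ i, 0 < lam i)
    (η : ℝ) (hη : 0 < η) (hEtaLam : η * lam 0 < 1)
    (x : EuclideanSpace ℝ (Fin (D+1))) (hx : x ≠ 0)
    (hnorm : ‖x‖ ≤ η * (lam 0)^2 / (2 - η * lam 0)) :
    |⟪x - η • A x - (η / ‖x‖) • A (A x), v 0⟫| ≥ |⟪x, v 0⟫| := by
  have hxnorm : (0:ℝ) < ‖x‖ := norm_pos_iff.mpr hx
  have hAx : ⟪A x, v 0⟫ = lam 0 * ⟪x, v 0⟫ := by
    rw [hsymm, heig, real_inner_smul_right]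
  have hAAx : ⟪A (A x), v 0⟫ = lam 0 ^ 2 * ⟪x, v 0⟫ := by
    rw [hsymm, heig, real_inner_smul_right, hAx]; ring
  have hexp : ⟪x - η • A x - (η / ‖x‖) • A (A x), v 0⟫
      = (1 - η * lam 0 - η * lam 0 ^ 2 / ‖x‖) * ⟪x, v 0⟫ := by
    rw [inner_sub_left, inner_sub_left, real_inner_smul_left, real_inner_smul_left,
      hAx, hAAx]
    field_simp
  rw [hexp, abs_mul]
  have h2 : (0:ℝ) < 2 - η * lam 0 := by linarith
  have hkey : 2 - η * lam 0 ≤ η * lam 0 ^ 2 / ‖x‖ := by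
    rw [le_div_iff₀ hxnorm]
    calc (2 - η * lam 0) * ‖x‖ ≤ (2 - η * lam 0) * (η * lam 0 ^2 / (2 - η * lam 0)) := by
          exact mul_le_mul_of_nonneg_left hnorm (le_of_lt h2)
      _ = η * lam 0 ^ 2 := by field_simp
  have hc : 1 - η * lam 0 - η * lam 0 ^ 2 / ‖x‖ ≤ -1 := by linarith
  have habs : 1 ≤ |1 - η * lam 0 - η * lam 0 ^ 2 / ‖x‖| := by
    exact le_trans (by linarith) (neg_le_abs _)
  nlinarith [abs_nonneg (⟪x, v 0⟫ : ℝ)]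
end

section
/- Let A be symmetric positive definite with eigenvalues λ_1 ≥ ... ≥ λ_D > 0 and η λ_1 < 1. For x ≠ 0 with ‖x‖ ≤ η λ_1²/(2 − η λ_1), the update x' = x − ηA x − η A² x/‖x‖ satisfies ‖x'‖ ≤ η λ_1² − (1 − η λ_1)‖x‖. -/
open scoped BigOperators RealInnerProductSpace

set_option maxHeartbeats 1000000

/-- One-step norm control of the SAM-quadratic update:
if `‖x‖ ≤ η λ_1²/(2 − η λ_1)` then `‖x'‖ ≤ η λ_1² − (1 − η λ_1)‖x‖`. -/
theorem sam_quadratic_one_step_norm {D : ℕ}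
    (A : EuclideanSpace ℝ (Fin (D+1)) →L[ℝ] EuclideanSpace ℝ (Fin (D+1)))
    (lam : Fin (D+1) → ℝ) (v : Fin (D+1) → EuclideanSpace ℝ (Fin (D+1)))
    (hsymm : ∀ x y, ⟪A x, y⟫ = ⟪x, A y⟫)
    (horth : Orthonormal ℝ v)
    (heig : ∀ i, A (v i) = lam i • v i)
    (hdesc : ∀ i j : Fin (D+1), i ≤ j → lam j ≤ lam i)
    (hpos : ∀ i, 0 < lam i)
    (η : ℝ) (hη : 0 < η) (hEtaLam : η * lam 0 < 1)
    (x : EuclideanSpace ℝ (Fin (D+1))) (hx : x ≠ 0)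
    (hnorm : ‖x‖ ≤ η * (lam 0)^2 / (2 - η * lam 0)) :
    ‖x - η • A x - (η / ‖x‖) • A (A x)‖ ≤ η * (lam 0)^2 - (1 - η * lam 0) * ‖x‖ := by
  have hcpos : (0:ℝ) < ‖x‖ := norm_pos_iff.mpr hx
  set c := ‖x‖ with hc
  set M : ℝ := η * (lam 0)^2 / c - (1 - η * lam 0) with hM
  clear_value M
  clear_value c
  have hcne : c ≠ 0 := ne_of_gt hcpos
  have h2 : (0:ℝ) < 2 - η * lam 0 := by linarith
  have hM1 : 1 ≤ M := by
    have hdiv : 2 - η * lam 0 ≤ η * (lam 0)^2 / c := by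
      rw [le_div_iff₀ hcpos]
      calc (2 - η * lam 0) * c ≤ (2 - η * lam 0) * (η * (lam 0)^2 / (2 - η * lam 0)) := by
            exact mul_le_mul_of_nonneg_left hnorm (le_of_lt h2)
        _ = η * (lam 0)^2 := by field_simp
    simp only [hM]; linarith
  -- orthonormal basis
  have hcard : Fintype.card (Fin (D+1)) =
      Module.finrank ℝ (EuclideanSpace ℝ (Fin (D+1))) := by simp
  have hb0 := coe_basisOfOrthonormalOfCardEqFinrank horth hcard
  set b0 := basisOfOrthonormalOfCardEqFinrank horth hcard with hb0def
  have horth' : Orthonormal ℝ (⇑b0) := by rw [hb0]; exact horth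
  have hxsum : ∑ i, ⟪v i, x⟫ • v i = x := by
    have := (b0.toOrthonormalBasis horth').sum_repr' x
    simpa [Module.Basis.coe_toOrthonormalBasis, hb0] using this
  have hAx : A x = ∑ i, (lam i * ⟪v i, x⟫) • v i := by
    conv_lhs => rw [← hxsum]
    rw [map_sum]
    refine Finset.sum_congr rfl fun i _ => ?_
    rw [map_smul, heig, smul_smul, mul_comm]
  have hAAx : A (A x) = ∑ i, ((lam i)^2 * ⟪v i, x⟫) • v i := by
    rw [hAx, map_sum]
    refine Finset.sum_congr rfl fun i _ => ?_
    rw [map_smul, heig, smul_smul]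
    ring_nf
  have key : x - η • A x - (η / c) • A (A x)
      = ∑ i, ((1 - η * lam i - η / c * (lam i)^2) * ⟪v i, x⟫) • v i := by
    symm
    calc ∑ i, ((1 - η * lam i - η / c * (lam i)^2) * ⟪v i, x⟫) • v i
        = ∑ i, (⟪v i, x⟫ • v i - η • ((lam i * ⟪v i, x⟫) • v i)
            - (η / c) • (((lam i)^2 * ⟪v i, x⟫) • v i)) := by
          refine Finset.sum_congr rfl fun i _ => ?_
          rw [smul_smul, smul_smul, ← sub_smul, ← sub_smul]
          congr 1
          ring
      _ = (∑ i, ⟪v i, x⟫ • v i) - η • (∑ i, (lam i * ⟪v i, x⟫) • v i)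
            - (η / c) • (∑ i, ((lam i)^2 * ⟪v i, x⟫) • v i) := by
          rw [Finset.sum_sub_distrib, Finset.sum_sub_distrib, Finset.smul_sum, Finset.smul_sum]
      _ = x - η • A x - (η / c) • A (A x) := by rw [hxsum, ← hAx, ← hAAx]
  have hns : ∀ l : Fin (D+1) → ℝ, ‖∑ i, l i • v i‖^2 = ∑ i, (l i)^2 := by
    intro l
    rw [← real_inner_self_eq_norm_sq, horth.inner_sum]
    simp [sq]
  -- per-eigenvalue bound
  have hmu : ∀ i, |1 - η * lam i - η / c * (lam i)^2| ≤ M := by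
    intro i
    have hli : lam i ≤ lam 0 := hdesc 0 i (Fin.zero_le i)
    have hlip : 0 < lam i := hpos i
    have h1 : η * lam i ≤ η * lam 0 := by nlinarith
    have h2' : η / c * (lam i)^2 ≤ η / c * (lam 0)^2 := by
      have : (lam i)^2 ≤ (lam 0)^2 := by nlinarith
      exact mul_le_mul_of_nonneg_left this (le_of_lt (div_pos hη hcpos))
    have hMc : M = η / c * (lam 0)^2 - (1 - η * lam 0) := by
      rw [hM]; ring
    rw [abs_le]
    constructor
    · rw [hMc] at *; nlinarith
    · have ha : (0:ℝ) < η * lam i := mul_pos hη hlip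
      have hb : (0:ℝ) < η / c * (lam i)^2 :=
        mul_pos (div_pos hη hcpos) (pow_pos hlip 2)
      linarith
  have hM0 : 0 ≤ M := by linarith
  have hsq : ‖x - η • A x - (η / c) • A (A x)‖^2 ≤ (M * c)^2 := by
    rw [key, hns]
    have hxc : (∑ i, (⟪v i, x⟫:ℝ)^2) = c^2 := by
      have := hns (fun i => ⟪v i, x⟫)
      rw [hxsum, ← hc] at this
      linarith [this]
    calc (∑ i, ((1 - η * lam i - η / c * (lam i)^2) * ⟪v i, x⟫)^2)
        ≤ ∑ i, M^2 * (⟪v i, x⟫:ℝ)^2 := by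
          refine Finset.sum_le_sum fun i _ => ?_
          rw [mul_pow]
          have := hmu i
          have h := sq_le_sq' (neg_le_of_abs_le this) (le_of_abs_le this)
          nlinarith [sq_nonneg (⟪v i, x⟫:ℝ)]
      _ = M^2 * ∑ i, (⟪v i, x⟫:ℝ)^2 := by rw [Finset.mul_sum]
      _ = (M * c)^2 := by rw [hxc]; ring
  have hfin : ‖x - η • A x - (η / c) • A (A x)‖ ≤ M * c := by
    have h1 : (0:ℝ) ≤ M * c := mul_nonneg hM0 (le_of_lt hcpos)
    nlinarith [norm_nonneg (x - η • A x - (η / c) • A (A x))]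
  calc ‖x - η • A x - (η / c) • A (A x)‖ ≤ M * c := hfin
    _ = η * (lam 0)^2 - (1 - η * lam 0) * c := by
        rw [hM]; field_simp
end

section
/- For real numbers a, b, c with 0 < a < b, 0 < c < (b−a)/b², and a·√((a² + 2b²)/(2(1−cb))) ≥ (a² + b²)/(2 − ca − cb), it holds that a > b/2 and cb ≤ 1/2. -/
set_option maxHeartbeats 1000000 in

/-- Algebraic lemma: under the stated conditions, `a > b/2` and `cb ≤ 1/2`. -/
theorem regularlambda (a b c : ℝ) (ha : 0 < a) (hab : a < b)
    (hc : 0 < c) (hcb : c < (b - a) / b ^ 2)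
    (hineq : a * Real.sqrt ((a ^ 2 + 2 * b ^ 2) / (2 * (1 - c * b)))
        ≥ (a ^ 2 + b ^ 2) / (2 - c * a - c * b)) :
    a > b / 2 ∧ c * b ≤ 1 / 2 := by
  have hb : 0 < b := ha.trans hab
  have hb2 : (0:ℝ) < b ^ 2 := by positivity
  have hcb2 : c * b ^ 2 < b - a := by
    have := (lt_div_iff₀ hb2).mp hcb
    linarith
  have hd : 0 < b - a - c * b ^ 2 := by linarith
  have hpos1 : 0 < 1 - c * b := by nlinarith
  have hca : c * a < c * b := by nlinarith
  have hpos2 : 0 < 2 - c * a - c * b := by nlinarith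
  have harg : 0 ≤ (a ^ 2 + 2 * b ^ 2) / (2 * (1 - c * b)) := by positivity
  set s := Real.sqrt ((a ^ 2 + 2 * b ^ 2) / (2 * (1 - c * b))) with hs
  have hs2 : s ^ 2 = (a ^ 2 + 2 * b ^ 2) / (2 * (1 - c * b)) := Real.sq_sqrt harg
  have hrnn : 0 ≤ (a ^ 2 + b ^ 2) / (2 - c * a - c * b) := by positivity
  have hsq : ((a ^ 2 + b ^ 2) / (2 - c * a - c * b)) ^ 2 ≤ (a * s) ^ 2 :=
    pow_le_pow_left₀ hrnn hineq 2
  have hdiv : (a ^ 2 + b ^ 2) ^ 2 / (2 - c * a - c * b) ^ 2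
      ≤ a ^ 2 * (a ^ 2 + 2 * b ^ 2) / (2 * (1 - c * b)) := by
    calc (a ^ 2 + b ^ 2) ^ 2 / (2 - c * a - c * b) ^ 2
        = ((a ^ 2 + b ^ 2) / (2 - c * a - c * b)) ^ 2 := by rw [div_pow]
      _ ≤ (a * s) ^ 2 := hsq
      _ = a ^ 2 * s ^ 2 := by ring
      _ = _ := by rw [hs2]; ring
  have H : 2 * (1 - c * b) * (a ^ 2 + b ^ 2) ^ 2
      ≤ a ^ 2 * (a ^ 2 + 2 * b ^ 2) * (2 - c * a - c * b) ^ 2 := by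
    rw [div_le_div_iff₀ (by positivity) (by positivity)] at hdiv
    nlinarith [hdiv]
  have key : a > b / 2 := by
    by_contra h
    push_neg at h
    have h4 : 4 * a ^ 2 ≤ b ^ 2 := by nlinarith
    have hq0 : 0 < b ^ 4 - 2 * a ^ 2 * b ^ 2 - a ^ 4 := by
      nlinarith [mul_nonneg (sub_nonneg.mpr h4) hb2.le, mul_nonneg (sub_nonneg.mpr h4) (sq_nonneg a), mul_pos (mul_pos ha ha) (mul_pos ha ha)]
    have hq1 : 0 < 2 * b ^ 3 - 2 * a * b ^ 2 - a ^ 3 := by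
      have h3 : a ^ 3 ≤ (b / 2) ^ 3 := pow_le_pow_left₀ ha.le h 3
      nlinarith [mul_nonneg (by linarith : (0:ℝ) ≤ b - 2 * a) hb2.le]
    have HH : 0 ≤ (a ^ 2 * (a ^ 2 + 2 * b ^ 2) * (2 - c * a - c * b) ^ 2
        - 2 * (1 - c * b) * (a ^ 2 + b ^ 2) ^ 2) * ((b - a) * b ^ 2) :=
      mul_nonneg (by linarith) (mul_pos (by linarith : (0:ℝ) < b - a) hb2).le
    have T1 : 0 < (b ^ 4 - 2 * a ^ 2 * b ^ 2 - a ^ 4) * ((b - a - c * b ^ 2) * b ^ 2) :=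
      mul_pos hq0 (mul_pos hd hb2)
    have T2 : 0 < c * (2 * b ^ 3 - 2 * a * b ^ 2 - a ^ 3) * (a * (a ^ 2 + b ^ 2) ^ 2) :=
      mul_pos (mul_pos hc hq1) (by positivity)
    have T3 : 0 < (c * (b - a - c * b ^ 2) * (b - a)) * (a ^ 2 * (a ^ 2 + 2 * b ^ 2) * (a + b) ^ 2) :=
      mul_pos (mul_pos (mul_pos hc hd) (by linarith)) (by positivity)
    linarith [HH, T1, T2, T3]
  refine ⟨key, ?_⟩
  nlinarith [hcb2]
end

section
/- For real numbers a, b, c with 0 < a < b, 0 < c < (b−a)/b², and a·√((a²+2b²)/(2(1−cb))) ≥ (a²+b²)/(2−ca−cb), it holds that cb² + ca²(2 − cb − (2/3)ca) − (1−cb)cb² − ca²((1/2)a² + b²)/b² ≤ cb²/(2−cb). -/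
lemma key (t y : ℝ) (ht : 0 < t) (hy : 0 < y) (hty : t + y ≤ 1) :
    t ^ 2 * (2 - y) * (1 - y - (2/3) * t * y - t ^ 2 / 2) ≤ (1 - y) ^ 2 := by
  nlinarith [sq_nonneg (1 - t), sq_nonneg (1 - t - y), sq_nonneg (1 - t^2), sq_nonneg t, sq_nonneg y, mul_pos ht hy, sq_nonneg (t*y), sq_nonneg (1 - t*y), mul_nonneg (mul_nonneg ht.le hy.le) (sub_nonneg.2 hty), sq_nonneg ((1-t)*(1-y))]

/-- Technical algebraic inequality (Lemma `norminequal2`). -/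
theorem norminequal2 (a b c : ℝ) (ha : 0 < a) (hab : a < b)
    (hc : 0 < c) (hcb : c < (b - a) / b ^ 2)
    (hineq : a * Real.sqrt ((a ^ 2 + 2 * b ^ 2) / (2 * (1 - c * b)))
        ≥ (a ^ 2 + b ^ 2) / (2 - c * a - c * b)) :
    c * b ^ 2 + c * a ^ 2 * (2 - c * b - (2 / 3) * c * a)
      - (1 - c * b) * (c * b ^ 2)
      - c * a ^ 2 * ((1 / 2) * a ^ 2 + b ^ 2) / b ^ 2
      ≤ c * b ^ 2 / (2 - c * b) := by
  have hb : 0 < b := ha.trans hab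
  have h1 : c * b ^ 2 < b - a := (lt_div_iff₀ (by positivity)).mp hcb
  have h2 : c * b < 1 := by nlinarith
  have h3 : 0 < 2 - c * b := by nlinarith
  set t := a / b with htdef
  set y := c * b with hydef
  have ht : 0 < t := by positivity
  have hty : t + y ≤ 1 := by
    rw [htdef, div_add' _ _ _ hb.ne', div_le_one hb]
    nlinarith
  have hK := key t y ht (by positivity) hty
  have hat : a = t * b := by rw [htdef, div_mul_cancel₀ a hb.ne']
  have hcy : c = y / b := by field_simp [hydef]; exact hydef.symm
  rw [le_div_iff₀ h3, hat, hcy]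
  have hb2 : (0:ℝ) < b ^ 2 := by positivity
  field_simp
  nlinarith [mul_nonneg (by positivity : (0:ℝ) ≤ 6 * y) (sub_nonneg.2 hK)]
end

section
/- Let Z ⊂ R^D be a closed set of Lebesgue measure zero and F : R^D \ Z → R^D be continuously differentiable. Then for all but countably many η ∈ (0,∞), the set {x ∈ R^D \ Z : det(I − η·∂F(x)) = 0} has Lebesgue measure zero. -/
open MeasureTheory Polynomial ENNReal

section Aux

/-- Evaluation of the reversed characteristic polynomial. -/
lemma eval_charpolyRev_eq {n : Type*} [Fintype n] [DecidableEq n] {R : Type*} [CommRing R]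
    (M : Matrix n n R) (η : R) : (M.charpolyRev).eval η = (1 - η • M).det := by
  rw [Matrix.charpolyRev, ← coe_evalRingHom, RingHom.map_det]
  congr 1
  ext i j
  rcases eq_or_ne i j with rfl | hij
  · simp only [RingHom.mapMatrix_apply, Matrix.map_apply, Matrix.sub_apply, Matrix.smul_apply,
      Matrix.one_apply_eq, coe_evalRingHom, eval_sub, eval_one, eval_mul, eval_X, eval_C,
      smul_eq_mul, Pi.smul_apply]
  · simp only [RingHom.mapMatrix_apply, Matrix.map_apply, Matrix.sub_apply, Matrix.smul_apply,
      Matrix.one_apply_ne hij, coe_evalRingHom, eval_sub, eval_zero, eval_mul, eval_X, eval_C,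
      smul_eq_mul, Pi.smul_apply]

/-- For any endomorphism `A` of a `D`-dimensional Euclidean space, the set of `η` such that
`1 - η • A` is singular is contained in a finset of cardinality at most `D`. -/
lemma exists_bad_finset {D : ℕ}
    (A : EuclideanSpace ℝ (Fin D) →ₗ[ℝ] EuclideanSpace ℝ (Fin D)) :
    ∃ t : Finset ℝ, t.card ≤ D ∧ ∀ η : ℝ, LinearMap.det (1 - η • A) = 0 → η ∈ t := by
  classical
  set b := (EuclideanSpace.basisFun (Fin D) ℝ).toBasis
  set M := LinearMap.toMatrix b b A with hM
  have hp0 : M.charpolyRev ≠ 0 := by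
    intro h
    have := M.eval_charpolyRev
    rw [h] at this
    simpa using this
  refine ⟨M.charpolyRev.roots.toFinset, ?_, ?_⟩
  · calc M.charpolyRev.roots.toFinset.card ≤ Multiset.card M.charpolyRev.roots :=
          Multiset.toFinset_card_le _
      _ ≤ M.charpolyRev.natDegree := Polynomial.card_roots' _
      _ ≤ M.charpoly.natDegree := by
          rw [← Matrix.reverse_charpoly]
          exact Polynomial.reverse_natDegree_le _
      _ = D := by simp [Matrix.charpoly_natDegree_eq_dim]
  · intro η hdet
    rw [Multiset.mem_toFinset, Polynomial.mem_roots hp0]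
    have h1 : (LinearMap.toMatrix b b (1 - η • A)).det = 0 := by
      rw [LinearMap.det_toMatrix]; exact hdet
    rw [map_sub, _root_.map_smul, LinearMap.toMatrix_one] at h1
    rw [Polynomial.IsRoot, eval_charpolyRev_eq]
    exact h1

/-- If every point lies in at most `N` of the sets `s i`, all contained in `B`, then the sum of
measures over any finset of indices is at most `N * μ B`. -/
lemma sum_meas_le_of_mul {α ι : Type*} [MeasurableSpace α] (μ : Measure α) (N : ℕ)
    (s : ι → Set α) (hmeas : ∀ i, MeasurableSet (s i)) (B : Set α) (hsub : ∀ i, s i ⊆ B)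
    (hmul : ∀ x, ∃ t : Finset ι, t.card ≤ N ∧ ∀ i, x ∈ s i → i ∈ t)
    (F : Finset ι) : ∑ i ∈ F, μ (s i) ≤ N * μ B := by
  classical
  calc ∑ i ∈ F, μ (s i)
      = ∑ i ∈ F, ∫⁻ x, (s i).indicator (fun _ => (1:ℝ≥0∞)) x ∂μ := by
        refine Finset.sum_congr rfl fun i _ => ?_
        rw [lintegral_indicator (hmeas i)]
        simp
    _ = ∫⁻ x, ∑ i ∈ F, (s i).indicator (fun _ => (1:ℝ≥0∞)) x ∂μ :=
        (lintegral_finset_sum _ fun i _ => measurable_const.indicator (hmeas i)).symm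
    _ ≤ ∫⁻ x, B.indicator (fun _ => (N:ℝ≥0∞)) x ∂μ := by
        refine lintegral_mono fun x => ?_
        by_cases hxB : x ∈ B
        · rw [Set.indicator_of_mem hxB]
          obtain ⟨t, htN, ht⟩ := hmul x
          calc ∑ i ∈ F, (s i).indicator (fun _ => (1:ℝ≥0∞)) x
              = ∑ i ∈ F.filter (fun i => x ∈ s i), 1 := by
                rw [Finset.sum_filter]
                refine Finset.sum_congr rfl fun i _ => ?_
                by_cases h : x ∈ s i <;> simp [h]
            _ = ((F.filter (fun i => x ∈ s i)).card : ℝ≥0∞) := by simp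
            _ ≤ (t.card : ℝ≥0∞) := by
                exact_mod_cast Nat.cast_le.mpr (Finset.card_le_card
                  (fun i hi => ht i (Finset.mem_filter.mp hi).2))
            _ ≤ (N : ℝ≥0∞) := Nat.cast_le.mpr htN
        · have h0 : ∀ i ∈ F, (s i).indicator (fun _ => (1:ℝ≥0∞)) x = 0 := fun i _ =>
            Set.indicator_of_notMem (fun hx => hxB (hsub i hx)) _
          rw [Finset.sum_eq_zero h0]
          exact zero_le
    _ ≤ N * μ B := lintegral_indicator_const_le _ _

/-- If every point lies in at most `N` of the measurable sets `s i`, all contained in a set of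
finite measure, then only countably many of the `s i` have nonzero measure. -/
lemma countable_meas_ne_zero {α ι : Type*} [MeasurableSpace α] (μ : Measure α) (N : ℕ)
    (s : ι → Set α) (hmeas : ∀ i, MeasurableSet (s i)) (B : Set α) (hB : μ B ≠ ⊤)
    (hsub : ∀ i, s i ⊆ B)
    (hmul : ∀ x, ∃ t : Finset ι, t.card ≤ N ∧ ∀ i, x ∈ s i → i ∈ t) :
    {i | μ (s i) ≠ 0}.Countable := by
  classical
  have key : ∀ m : ℕ, {i | ((m : ℝ≥0∞))⁻¹ ≤ μ (s i)}.Finite := by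
    intro m
    by_contra hinf
    -- find K with N * μ B < K * m⁻¹
    have hKex : ∃ K : ℕ, (N : ℝ≥0∞) * μ B < K * ((m : ℝ≥0∞))⁻¹ := by
      rcases Nat.eq_zero_or_pos m with rfl | hm
      · refine ⟨1, ?_⟩
        have hne : (N : ℝ≥0∞) * μ B ≠ ⊤ := ENNReal.mul_ne_top (by simp) hB
        simpa using lt_top_iff_ne_top.mpr hne
      · have hfin : (m : ℝ≥0∞) * ((N : ℝ≥0∞) * μ B) ≠ ⊤ := by
          exact ENNReal.mul_ne_top (by simp) (ENNReal.mul_ne_top (by simp) hB)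
        obtain ⟨K, hK⟩ := ENNReal.exists_nat_gt hfin
        refine ⟨K, ?_⟩
        have hm0 : (m : ℝ≥0∞) ≠ 0 := by exact_mod_cast hm.ne'
        have hmtop : (m : ℝ≥0∞) ≠ ⊤ := by simp
        have : ((m : ℝ≥0∞) * ((N : ℝ≥0∞) * μ B)) * (m : ℝ≥0∞)⁻¹
            < (K : ℝ≥0∞) * (m : ℝ≥0∞)⁻¹ := by
          exact (ENNReal.mul_lt_mul_left (ENNReal.inv_ne_zero.mpr hmtop)
            (ENNReal.inv_ne_top.mpr hm0) hK)
        calc (N : ℝ≥0∞) * μ B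
            = ((m : ℝ≥0∞) * ((N : ℝ≥0∞) * μ B)) * (m : ℝ≥0∞)⁻¹ := by
              rw [mul_comm (m : ℝ≥0∞), mul_assoc, ENNReal.mul_inv_cancel hm0 hmtop, mul_one]
          _ < (K : ℝ≥0∞) * (m : ℝ≥0∞)⁻¹ := this
    obtain ⟨K, hK⟩ := hKex
    obtain ⟨T, hTsub, hTfin, hTcard⟩ := Set.Infinite.exists_subset_ncard_eq hinf K
    have hsum : (K : ℝ≥0∞) * ((m : ℝ≥0∞))⁻¹ ≤ ∑ i ∈ hTfin.toFinset, μ (s i) := by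
      have hcard : hTfin.toFinset.card = K := by
        rw [← hTcard, Set.ncard_eq_toFinset_card _ hTfin]
      calc (K : ℝ≥0∞) * ((m : ℝ≥0∞))⁻¹ = hTfin.toFinset.card • ((m : ℝ≥0∞))⁻¹ := by
            rw [hcard, nsmul_eq_mul]
        _ ≤ ∑ i ∈ hTfin.toFinset, μ (s i) := by
            refine Finset.card_nsmul_le_sum _ _ _ fun i hi => ?_
            exact hTsub (hTfin.mem_toFinset.mp hi)
    have hle : ∑ i ∈ hTfin.toFinset, μ (s i) ≤ (N : ℝ≥0∞) * μ B :=
      sum_meas_le_of_mul μ N s hmeas B hsub hmul _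
    exact absurd (hsum.trans hle) (not_le.mpr hK)
  have hsubU : {i | μ (s i) ≠ 0} ⊆ ⋃ m : ℕ, {i | ((m : ℝ≥0∞))⁻¹ ≤ μ (s i)} := by
    intro i hi
    obtain ⟨n, hn⟩ := ENNReal.exists_inv_nat_lt hi
    exact Set.mem_iUnion.mpr ⟨n, hn.le⟩
  exact (Set.countable_iUnion fun m => (key m).countable).mono hsubU

end Aux

/-- For all but countably many `η > 0`, the set of points where the update map
`x ↦ x − ηF(x)` has singular Jacobian is Lebesgue-null. -/
theorem singular_jacobian_null_for_ae_stepsize {D : ℕ}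
    (Z : Set (EuclideanSpace ℝ (Fin D))) (hZclosed : IsClosed Z)
    (hZnull : volume Z = 0)
    (F : EuclideanSpace ℝ (Fin D) → EuclideanSpace ℝ (Fin D))
    (hF : ContDiffOn ℝ 1 F Zᶜ) :
    ∃ S : Set ℝ, S.Countable ∧ ∀ η : ℝ, 0 < η → η ∉ S →
      volume {x : EuclideanSpace ℝ (Fin D) | x ∉ Z ∧
        LinearMap.det ((1 - η • fderivWithin ℝ F Zᶜ x :
          EuclideanSpace ℝ (Fin D) →L[ℝ] EuclideanSpace ℝ (Fin D)) :
            EuclideanSpace ℝ (Fin D) →ₗ[ℝ] EuclideanSpace ℝ (Fin D)) = 0} = 0 := by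
  classical
  set A : ℝ → Set (EuclideanSpace ℝ (Fin D)) := fun η => {x : EuclideanSpace ℝ (Fin D) | x ∉ Z ∧
      LinearMap.det ((1 - η • fderivWithin ℝ F Zᶜ x : EuclideanSpace ℝ (Fin D) →L[ℝ] EuclideanSpace ℝ (Fin D)) : EuclideanSpace ℝ (Fin D) →ₗ[ℝ] EuclideanSpace ℝ (Fin D)) = 0} with hA
  have hopen : IsOpen Zᶜ := hZclosed.isOpen_compl
  have hcont : ContinuousOn (fderivWithin ℝ F Zᶜ) Zᶜ :=
    hF.continuousOn_fderivWithin hopen.uniqueDiffOn le_rfl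
  have hAmeas : ∀ η : ℝ, MeasurableSet (A η) := by
    intro η
    have hg : ContinuousOn
        (fun x : EuclideanSpace ℝ (Fin D) => LinearMap.det ((1 - η • fderivWithin ℝ F Zᶜ x : EuclideanSpace ℝ (Fin D) →L[ℝ] EuclideanSpace ℝ (Fin D)) : EuclideanSpace ℝ (Fin D) →ₗ[ℝ] EuclideanSpace ℝ (Fin D)))
        Zᶜ := by
      exact ContinuousLinearMap.continuous_det.comp_continuousOn
        (continuousOn_const.sub (hcont.const_smul η))
    have hopen2 : IsOpen (Zᶜ ∩ (fun x : EuclideanSpace ℝ (Fin D) =>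
        LinearMap.det ((1 - η • fderivWithin ℝ F Zᶜ x : EuclideanSpace ℝ (Fin D) →L[ℝ] EuclideanSpace ℝ (Fin D)) : EuclideanSpace ℝ (Fin D) →ₗ[ℝ] EuclideanSpace ℝ (Fin D))) ⁻¹' {(0:ℝ)}ᶜ) :=
      hg.isOpen_inter_preimage hopen (isOpen_compl_iff.mpr isClosed_singleton)
    have heq : A η = Zᶜ \ (Zᶜ ∩ (fun x : EuclideanSpace ℝ (Fin D) =>
        LinearMap.det ((1 - η • fderivWithin ℝ F Zᶜ x : EuclideanSpace ℝ (Fin D) →L[ℝ] EuclideanSpace ℝ (Fin D)) : EuclideanSpace ℝ (Fin D) →ₗ[ℝ] EuclideanSpace ℝ (Fin D))) ⁻¹' {(0:ℝ)}ᶜ) := by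
      ext x
      simp only [hA, Set.mem_setOf_eq, Set.mem_diff, Set.mem_inter_iff, Set.mem_compl_iff,
        Set.mem_preimage, Set.mem_singleton_iff, not_and, not_not]
      tauto
    rw [heq]
    exact hopen.measurableSet.diff hopen2.measurableSet
  -- the multiplicity bound
  have hmul : ∀ n : ℕ, ∀ x : EuclideanSpace ℝ (Fin D), ∃ t : Finset ℝ, t.card ≤ D ∧
      ∀ η : ℝ, x ∈ (if 0 < η then A η ∩ Metric.closedBall (0:EuclideanSpace ℝ (Fin D)) n else ∅) → η ∈ t := by
    intro n x
    obtain ⟨t, htD, ht⟩ :=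
      exists_bad_finset ((fderivWithin ℝ F Zᶜ x : EuclideanSpace ℝ (Fin D) →L[ℝ] EuclideanSpace ℝ (Fin D)) : EuclideanSpace ℝ (Fin D) →ₗ[ℝ] EuclideanSpace ℝ (Fin D))
    refine ⟨t, htD, fun η hx => ?_⟩
    by_cases hη : 0 < η
    · rw [if_pos hη] at hx
      have hx' : x ∈ A η := hx.1
      have hdet := hx'.2
      refine ht η ?_
      have : ((1 - η • fderivWithin ℝ F Zᶜ x : EuclideanSpace ℝ (Fin D) →L[ℝ] EuclideanSpace ℝ (Fin D)) : EuclideanSpace ℝ (Fin D) →ₗ[ℝ] EuclideanSpace ℝ (Fin D))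
          = 1 - η • ((fderivWithin ℝ F Zᶜ x : EuclideanSpace ℝ (Fin D) →L[ℝ] EuclideanSpace ℝ (Fin D)) : EuclideanSpace ℝ (Fin D) →ₗ[ℝ] EuclideanSpace ℝ (Fin D)) := by
        ext v; simp
      rwa [this] at hdet
    · rw [if_neg hη] at hx
      exact absurd hx (Set.notMem_empty x)
  -- countability for each ball
  have hcnt : ∀ n : ℕ,
      {η : ℝ | volume (if 0 < η then A η ∩ Metric.closedBall (0:EuclideanSpace ℝ (Fin D)) n else ∅) ≠ 0}.Countable := by
    intro n
    refine countable_meas_ne_zero volume D _ ?_ (Metric.closedBall (0:EuclideanSpace ℝ (Fin D)) n)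
      (measure_closedBall_lt_top).ne ?_ (hmul n)
    · intro η
      by_cases hη : 0 < η
      · rw [if_pos hη]
        exact (hAmeas η).inter measurableSet_closedBall
      · rw [if_neg hη]; exact MeasurableSet.empty
    · intro η
      by_cases hη : 0 < η
      · rw [if_pos hη]; exact Set.inter_subset_right
      · rw [if_neg hη]; exact Set.empty_subset _
  refine ⟨⋃ n : ℕ,
    {η : ℝ | volume (if 0 < η then A η ∩ Metric.closedBall (0:EuclideanSpace ℝ (Fin D)) n else ∅) ≠ 0},
    Set.countable_iUnion hcnt, ?_⟩
  intro η hη hηS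
  have hball : ∀ n : ℕ, volume (A η ∩ Metric.closedBall (0:EuclideanSpace ℝ (Fin D)) n) = 0 := by
    intro n
    have : η ∉ {η : ℝ | volume (if 0 < η then A η ∩ Metric.closedBall (0:EuclideanSpace ℝ (Fin D)) n else ∅) ≠ 0} :=
      fun h => hηS (Set.mem_iUnion.mpr ⟨n, h⟩)
    simpa [hη, Set.mem_setOf_eq, not_not] using this
  have hsub : A η ⊆ ⋃ n : ℕ, A η ∩ Metric.closedBall (0:EuclideanSpace ℝ (Fin D)) n := by
    intro x hx
    obtain ⟨n, hn⟩ := exists_nat_ge ‖x‖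
    exact Set.mem_iUnion.mpr ⟨n, hx, by simpa [Metric.mem_closedBall, dist_zero_right] using hn⟩
  exact measure_mono_null hsub (measure_iUnion_null hball)
end

section
/- For every η > 0 and ρ > 0, there exists a C^2 loss function L : R → R with a unique stationary point such that the set of initializations x(0) for which the SAM iteration x(t+1) = x(t) − η L'(x(t) + ρ·L'(x(t))/|L'(x(t))|) reaches the stationary point in one step (i.e., x(1) is the stationary point) has positive Lebesgue measure. -/
open MeasureTheory

/-- For every `η, ρ > 0` there is a `C²` one-dimensional loss with a unique stationary
point such that a positive-measure set of initializations reaches the stationary point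
in one step of SAM. -/
theorem sam_reaches_stationary_point_with_positive_probability :
    ∀ η ρ : ℝ, 0 < η → 0 < ρ →
      ∃ L : ℝ → ℝ, ContDiff ℝ 2 L ∧
        ∃ c : ℝ, deriv L c = 0 ∧ (∀ z : ℝ, deriv L z = 0 → z = c) ∧
          0 < volume {x : ℝ | deriv L x ≠ 0 ∧
            x - η * deriv L (x + ρ * (deriv L x / |deriv L x|)) = c} := by
  intro η ρ hη hρ
  set ψ : ℝ → ℝ := fun t => Real.smoothTransition (8 * t / ρ - 10) with hψdef
  have hψcont : Continuous ψ :=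
    Real.smoothTransition.continuous.comp (by continuity)
  have hψsmooth : ContDiff ℝ 1 ψ :=
    (Real.smoothTransition.contDiff (n := 1)).comp
      (((contDiff_const.mul contDiff_id).div_const ρ).sub contDiff_const)
  -- ψ vanishes on (-∞, 5ρ/4]
  have hψ0 : ∀ t : ℝ, t ≤ 5 * ρ / 4 → ψ t = 0 := by
    intro t ht
    apply Real.smoothTransition.zero_of_nonpos
    have : 8 * t / ρ ≤ 10 := by
      rw [div_le_iff₀ hρ]
      nlinarith
    linarith
  -- ψ = 1 on [11ρ/8, ∞)
  have hψ1 : ∀ t : ℝ, 11 * ρ / 8 ≤ t → ψ t = 1 := by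
    intro t ht
    apply Real.smoothTransition.one_of_one_le
    have : 11 ≤ 8 * t / ρ := by
      rw [le_div_iff₀ hρ]
      nlinarith
    linarith
  have hψmem : ∀ t : ℝ, 0 ≤ ψ t ∧ ψ t ≤ 1 := fun t =>
    ⟨Real.smoothTransition.nonneg _, Real.smoothTransition.le_one _⟩
  set L : ℝ → ℝ := fun x => x ^ 2 / (2 * η) - (ρ / η) * ∫ t in (0:ℝ)..x, ψ t with hLdef
  -- derivative of L
  have hderivAt : ∀ x : ℝ, HasDerivAt L (x / η - (ρ / η) * ψ x) x := by
    intro x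
    have h1 : HasDerivAt (fun x : ℝ => x ^ 2 / (2 * η)) (x / η) x := by
      have := (hasDerivAt_pow 2 x).div_const (2 * η)
      refine this.congr_deriv ?_
      field_simp
      ring
    have h2 : HasDerivAt (fun x : ℝ => ∫ t in (0:ℝ)..x, ψ t) (ψ x) x :=
      intervalIntegral.integral_hasDerivAt_right
        (hψcont.intervalIntegrable _ _)
        (hψcont.stronglyMeasurableAtFilter _ _)
        hψcont.continuousAt
    exact h1.sub ((h2.const_mul (ρ / η)))
  have hderiv : deriv L = fun x => x / η - (ρ / η) * ψ x := by
    funext x; exact (hderivAt x).deriv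
  -- zeros of deriv L
  have hzero : ∀ z : ℝ, deriv L z = 0 → z = 0 := by
    intro z hz
    rw [hderiv] at hz
    simp only at hz
    have hz' : z = ρ * ψ z := by
      have h := sub_eq_zero.mp hz
      field_simp at h
      linarith
    by_contra hne
    rcases lt_or_gt_of_ne hne with h | h
    · have := (hψmem z).1
      nlinarith
    · -- z > 0 : if ψ z = 0 then z = 0; else z > 5ρ/4 > ρ ≥ ρ ψ z
      by_cases hc : z ≤ 5 * ρ / 4
      · rw [hψ0 z hc] at hz'; simp at hz'; exact hne hz'
      · push_neg at hc
        have h1 : ρ * ψ z ≤ ρ := by nlinarith [(hψmem z).1, (hψmem z).2]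
        nlinarith
  refine ⟨L, ?_, 0, ?_, hzero, ?_⟩
  · -- C² smoothness
    have h2 : (2 : WithTop ℕ∞) = 1 + 1 := by norm_num
    rw [h2, contDiff_succ_iff_deriv]
    refine ⟨fun x => (hderivAt x).differentiableAt, by simp, ?_⟩
    rw [hderiv]
    exact (contDiff_id.div_const η).sub (contDiff_const.mul hψsmooth)
  · rw [hderiv]
    simp [hψ0 0 (by positivity)]
  · -- positive measure
    have hsub : Set.Ioo (ρ / 2) ρ ⊆ {x : ℝ | deriv L x ≠ 0 ∧
        x - η * deriv L (x + ρ * (deriv L x / |deriv L x|)) = 0} := by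
      intro x hx
      obtain ⟨hx1, hx2⟩ := hx
      have hx0 : 0 < x := lt_trans (by positivity) hx1
      have hdx : deriv L x = x / η := by
        rw [hderiv]
        simp [hψ0 x (by linarith)]
      have hdxpos : 0 < deriv L x := by rw [hdx]; positivity
      constructor
      · exact ne_of_gt hdxpos
      · have habs : ρ * (deriv L x / |deriv L x|) = ρ := by
          rw [abs_of_pos hdxpos, div_self (ne_of_gt hdxpos), mul_one]
        rw [habs]
        have hd2 : deriv L (x + ρ) = x / η := by
          rw [hderiv]
          simp only
          rw [hψ1 (x + ρ) (by linarith)]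
          field_simp
          ring
        rw [hd2]
        field_simp
        ring
    calc (0 : ENNReal) < volume (Set.Ioo (ρ / 2) ρ) := by
          rw [Real.volume_Ioo]
          simp only [ENNReal.ofReal_pos]
          linarith
      _ ≤ _ := measure_mono hsub
end

section
/- Let L : R^D → R be C³ on a convex compact set B with ‖∇³L‖ ≤ ν on B, and let x be an interior point of B with ∇L(x) = 0. Then for all sufficiently small ρ > 0, |E_{g∼N(0,I_D)}[L(x + ρ g/‖g‖₂)] − L(x) − (ρ²/(2D))·Tr(∇²L(x))| ≤ (ν/6)·ρ³. -/
open Set MeasureTheory ProbabilityTheory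

noncomputable def gammaD (D : ℕ) : Measure (Fin D → ℝ) :=
  Measure.pi fun _ : Fin D => gaussianReal 0 1

noncomputable def nrmD (D : ℕ) (g : Fin D → ℝ) : ℝ := Real.sqrt (∑ k, g k ^ 2)

noncomputable def qD (D : ℕ) (i j : Fin D) (g : Fin D → ℝ) : ℝ :=
  ((nrmD D g)⁻¹ * g i) * ((nrmD D g)⁻¹ * g j)

instance (D : ℕ) : IsProbabilityMeasure (gammaD D) := by
  unfold gammaD; infer_instance

lemma nrmD_nonneg (D : ℕ) (g : Fin D → ℝ) : 0 ≤ nrmD D g := Real.sqrt_nonneg _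

lemma nrmD_cont (D : ℕ) : Continuous (nrmD D) :=
  (continuous_finset_sum _ fun k _ => (continuous_apply k).pow 2).sqrt

lemma abs_coord_le_nrmD (D : ℕ) (i : Fin D) (g : Fin D → ℝ) : |g i| ≤ nrmD D g := by
  have h1 : g i ^ 2 ≤ ∑ k, g k ^ 2 :=
    Finset.single_le_sum (f := fun k => g k ^ 2) (fun k _ => sq_nonneg _) (Finset.mem_univ i)
  have := Real.sqrt_le_sqrt h1
  rwa [Real.sqrt_sq_eq_abs] at this

lemma abs_unit_coord_le_one (D : ℕ) (i : Fin D) (g : Fin D → ℝ) :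
    |(nrmD D g)⁻¹ * g i| ≤ 1 := by
  rcases eq_or_ne (nrmD D g) 0 with h | h
  · have := abs_coord_le_nrmD D i g
    rw [h] at this
    have : g i = 0 := abs_nonpos_iff.mp (by linarith [abs_nonneg (g i)])
    simp [h, this]
  · rw [abs_mul, abs_inv, abs_of_nonneg (nrmD_nonneg D g)]
    have hpos : 0 < nrmD D g := lt_of_le_of_ne (nrmD_nonneg D g) (Ne.symm h)
    rw [inv_mul_le_iff₀ hpos, mul_one]
    exact abs_coord_le_nrmD D i g

lemma abs_qD_le_one (D : ℕ) (i j : Fin D) (g : Fin D → ℝ) : |qD D i j g| ≤ 1 := by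
  rw [qD, abs_mul]
  exact mul_le_one₀ (abs_unit_coord_le_one D i g) (abs_nonneg _) (abs_unit_coord_le_one D j g)

lemma qD_measurable (D : ℕ) (i j : Fin D) : Measurable (qD D i j) := by
  unfold qD
  exact (((nrmD_cont D).measurable.inv).mul (measurable_pi_apply i)).mul
    (((nrmD_cont D).measurable.inv).mul (measurable_pi_apply j))

lemma qD_integrable (D : ℕ) (i j : Fin D) : Integrable (qD D i j) (gammaD D) := by
  refine (integrable_const (1:ℝ)).mono' ((qD_measurable D i j).aestronglyMeasurable) ?_
  exact Filter.Eventually.of_forall fun g => by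
    rw [Real.norm_eq_abs]; exact abs_qD_le_one D i j g

lemma gaussianReal_neg_mp : MeasurePreserving (fun x : ℝ => (-1 : ℝ) * x)
    (gaussianReal 0 1) (gaussianReal 0 1) := by
  refine ⟨(measurable_const_mul _), ?_⟩
  rw [gaussianReal_map_const_mul (-1 : ℝ)]
  norm_num

-- flip measurable equiv at coordinate i
noncomputable def flipME (D : ℕ) (i : Fin D) : MeasurableEquiv (Fin D → ℝ) (Fin D → ℝ) where
  toFun g := fun k => (if k = i then (-1:ℝ) else 1) * g k
  invFun g := fun k => (if k = i then (-1:ℝ) else 1) * g k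
  left_inv g := by funext k; by_cases h : k = i <;> simp [h]
  right_inv g := by funext k; by_cases h : k = i <;> simp [h]
  measurable_toFun := by
    exact measurable_pi_lambda _ fun k => (measurable_pi_apply k).const_mul _
  measurable_invFun := by
    exact measurable_pi_lambda _ fun k => (measurable_pi_apply k).const_mul _

lemma flipME_mp (D : ℕ) (i : Fin D) :
    MeasurePreserving (flipME D i) (gammaD D) (gammaD D) := by
  have h : ∀ k : Fin D, MeasurePreserving (fun x : ℝ => (if k = i then (-1:ℝ) else 1) * x)
      (gaussianReal 0 1) (gaussianReal 0 1) := by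
    intro k
    by_cases h : k = i
    · simpa [h] using gaussianReal_neg_mp
    · simp only [h, if_false, one_mul]
      exact ⟨measurable_id, Measure.map_id⟩
  exact measurePreserving_pi _ _ (fun k => h k)

lemma nrmD_flip (D : ℕ) (i : Fin D) (g : Fin D → ℝ) :
    nrmD D (flipME D i g) = nrmD D g := by
  unfold nrmD flipME
  congr 1
  refine Finset.sum_congr rfl fun k _ => ?_
  by_cases h : k = i <;> simp [h]

lemma qD_int_offdiag (D : ℕ) (i j : Fin D) (hij : i ≠ j) :
    ∫ g, qD D i j g ∂(gammaD D) = 0 := by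
  have h1 : ∫ g, qD D i j (flipME D i g) ∂(gammaD D) = ∫ g, qD D i j g ∂(gammaD D) :=
    (flipME_mp D i).integral_comp' _
  have h2 : ∀ g, qD D i j (flipME D i g) = - qD D i j g := by
    intro g
    unfold qD
    rw [nrmD_flip]
    have hi : (flipME D i) g i = - g i := by simp [flipME]
    have hj : (flipME D i) g j = g j := by simp [flipME, (Ne.symm hij)]
    rw [hi, hj]
    ring
  simp_rw [h2, integral_neg] at h1
  linarith

-- swap measurable equiv
noncomputable def swapME (D : ℕ) (e : Fin D ≃ Fin D) : MeasurableEquiv (Fin D → ℝ) (Fin D → ℝ) where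
  toFun g := g ∘ e
  invFun g := g ∘ e.symm
  left_inv g := by funext k; simp
  right_inv g := by funext k; simp
  measurable_toFun := measurable_pi_lambda _ fun k => measurable_pi_apply _
  measurable_invFun := measurable_pi_lambda _ fun k => measurable_pi_apply _

lemma swapME_mp (D : ℕ) (e : Fin D ≃ Fin D) :
    MeasurePreserving (swapME D e) (gammaD D) (gammaD D) := by
  have h := measurePreserving_arrowCongr' (fun _ : Fin D => gaussianReal 0 1)
    (fun _ : Fin D => gaussianReal 0 1) e.symm (MeasurableEquiv.refl ℝ)
    (fun _ => ⟨measurable_id, Measure.map_id⟩)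
  have he : ⇑(MeasurableEquiv.arrowCongr' e.symm (MeasurableEquiv.refl ℝ))
      = ⇑(swapME D e) := by
    funext g k
    simp [MeasurableEquiv.arrowCongr', Equiv.arrowCongr', Equiv.arrowCongr, swapME]
  rw [he] at h
  exact h

lemma nrmD_swap (D : ℕ) (e : Fin D ≃ Fin D) (g : Fin D → ℝ) :
    nrmD D (swapME D e g) = nrmD D g := by
  unfold nrmD
  congr 1
  exact Equiv.sum_comp e (fun k => g k ^ 2)

lemma qD_diag_eq (D : ℕ) (i j : Fin D) :
    ∫ g, qD D i i g ∂(gammaD D) = ∫ g, qD D j j g ∂(gammaD D) := by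
  have h1 : ∫ g, qD D i i (swapME D (Equiv.swap i j) g) ∂(gammaD D)
      = ∫ g, qD D i i g ∂(gammaD D) := (swapME_mp D _).integral_comp' _
  have h2 : ∀ g, qD D i i (swapME D (Equiv.swap i j) g) = qD D j j g := by
    intro g
    unfold qD
    rw [nrmD_swap]
    have : (swapME D (Equiv.swap i j)) g i = g j := by
      simp [swapME, Equiv.swap_apply_left]
    rw [this]
  simp_rw [h2] at h1
  exact h1.symm

lemma gaussian_zero_null : (gaussianReal 0 1) ({0} : Set ℝ) = 0 := by
  have h : gaussianReal 0 1 = MeasureTheory.volume.withDensity (gaussianPDF 0 1) :=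
    gaussianReal_of_var_ne_zero 0 one_ne_zero
  rw [h]
  exact withDensity_absolutelyContinuous _ _ (measure_singleton 0)

lemma nrmD_ne_zero_ae (D : ℕ) (hD : 0 < D) : ∀ᵐ g ∂(gammaD D), nrmD D g ≠ 0 := by
  set i0 : Fin D := ⟨0, hD⟩
  have hsub : {g : Fin D → ℝ | ¬ nrmD D g ≠ 0} ⊆ Function.eval i0 ⁻¹' ({0} : Set ℝ) := by
    intro g hg
    simp only [Set.mem_setOf_eq, not_not] at hg
    have hsum : ∑ k, g k ^ 2 = 0 := by
      by_contra hne
      have hpos : 0 < ∑ k, g k ^ 2 :=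
        lt_of_le_of_ne (Finset.sum_nonneg fun k _ => sq_nonneg _) (Ne.symm hne)
      exact absurd hg (ne_of_gt (Real.sqrt_pos.mpr hpos))
    have : g i0 ^ 2 = 0 := by
      have := Finset.sum_eq_zero_iff_of_nonneg (fun k _ => sq_nonneg (g k)) |>.mp hsum
      exact this i0 (Finset.mem_univ _)
    simpa [Function.eval] using (pow_eq_zero_iff two_ne_zero).mp this
  have hnull : (gammaD D) (Function.eval i0 ⁻¹' ({0} : Set ℝ)) = 0 :=
    Measure.pi_eval_preimage_null _ gaussian_zero_null
  exact measure_mono_null hsub hnull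

lemma qD_diag_sum (D : ℕ) (hD : 0 < D) :
    ∀ᵐ g ∂(gammaD D), ∑ i, qD D i i g = 1 := by
  filter_upwards [nrmD_ne_zero_ae D hD] with g hg
  unfold qD
  have hsq : nrmD D g ^ 2 = ∑ k, g k ^ 2 := by
    unfold nrmD
    exact Real.sq_sqrt (Finset.sum_nonneg fun k _ => sq_nonneg _)
  have : ∑ i, ((nrmD D g)⁻¹ * g i) * ((nrmD D g)⁻¹ * g i)
      = (nrmD D g)⁻¹ ^ 2 * ∑ i, g i ^ 2 := by
    rw [Finset.mul_sum]
    refine Finset.sum_congr rfl fun i _ => by ring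
  rw [this, ← hsq]
  field_simp

lemma qD_int_diag (D : ℕ) (hD : 0 < D) (i : Fin D) :
    ∫ g, qD D i i g ∂(gammaD D) = 1 / D := by
  have hsum : ∑ j, ∫ g, qD D j j g ∂(gammaD D) = 1 := by
    rw [← integral_finset_sum _ (fun j _ => qD_integrable D j j)]
    rw [integral_congr_ae (qD_diag_sum D hD)]
    simp
  have hall : ∀ j : Fin D, ∫ g, qD D j j g ∂(gammaD D) = ∫ g, qD D i i g ∂(gammaD D) :=
    fun j => qD_diag_eq D j i
  rw [Finset.sum_congr rfl (fun j _ => hall j), Finset.sum_const, Finset.card_univ,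
    Fintype.card_fin, nsmul_eq_mul] at hsum
  field_simp at hsum ⊢
  linarith


lemma taylor_third_order {E : Type*} [NormedAddCommGroup E] [NormedSpace ℝ E]
    {L : E → ℝ} {U : Set E} (hU : IsOpen U) (hL : ContDiffOn ℝ 3 L U)
    {ν : ℝ} (hν : ∀ y ∈ U, ‖iteratedFDeriv ℝ 3 L y‖ ≤ ν)
    {x : E} (hcrit : fderiv ℝ L x = 0)
    {v : E} (hseg : ∀ t : ℝ, t ∈ Icc (0:ℝ) 1 → x + t • v ∈ U) :
    |L (x + v) - L x - (1/2) * fderiv ℝ (fderiv ℝ L) x v v| ≤ ν / 6 * ‖v‖ ^ 3 := by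
  set f1 := fderiv ℝ L with hf1def
  set f2 := fderiv ℝ f1 with hf2def
  set f3 := fderiv ℝ f2 with hf3def
  have hCA : ∀ y ∈ U, ContDiffAt ℝ 3 L y := fun y hy => hL.contDiffAt (hU.mem_nhds hy)
  have h1 : ∀ y ∈ U, HasFDerivAt L (f1 y) y := fun y hy =>
    ((hCA y hy).differentiableAt (by norm_num)).hasFDerivAt
  have hc1 : ∀ y ∈ U, ContDiffAt ℝ 2 f1 y := fun y hy => (hCA y hy).fderiv_right (by norm_num)
  have h2 : ∀ y ∈ U, HasFDerivAt f1 (f2 y) y := fun y hy =>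
    ((hc1 y hy).differentiableAt (by norm_num)).hasFDerivAt
  have hc2 : ∀ y ∈ U, ContDiffAt ℝ 1 f2 y := fun y hy => (hc1 y hy).fderiv_right (by norm_num)
  have h3 : ∀ y ∈ U, HasFDerivAt f2 (f3 y) y := fun y hy =>
    ((hc2 y hy).differentiableAt (by norm_num)).hasFDerivAt
  have hb3 : ∀ y ∈ U, ∀ a b c : E, |f3 y a b c| ≤ ν * (‖a‖ * ‖b‖ * ‖c‖) := by
    intro y hy a b c
    have e1 : iteratedFDeriv ℝ 3 L y ![a, b, c] = f3 y a b c := by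
      have h := iteratedFDeriv_succ_apply_right (𝕜 := ℝ) (f := L) (x := y) (n := 2)
        (m := ![a, b, c])
      rw [iteratedFDeriv_two_apply] at h
      have hi : Fin.init (![a, b, c] : Fin 3 → E) = ![a, b] := by
        ext i; fin_cases i <;> simp [Fin.init]
      rw [hi] at h
      have hl : (![a, b, c] : Fin 3 → E) (Fin.last 2) = c := rfl
      rw [hl] at h
      exact h
    calc |f3 y a b c| = ‖iteratedFDeriv ℝ 3 L y ![a, b, c]‖ := by rw [e1]; rfl
      _ ≤ ‖iteratedFDeriv ℝ 3 L y‖ * ∏ i, ‖(![a, b, c]) i‖ :=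
          (iteratedFDeriv ℝ 3 L y).le_opNorm _
      _ ≤ ν * (‖a‖ * ‖b‖ * ‖c‖) := by
          rw [Fin.prod_univ_three]
          have : ‖a‖ * ‖b‖ * ‖c‖ = ‖(![a,b,c]) 0‖ * ‖(![a,b,c]) 1‖ * ‖(![a,b,c]) 2‖ := by simp
          rw [← this]
          exact mul_le_mul_of_nonneg_right (hν y hy)
            (by positivity)
  set c : ℝ → E := fun t => x + t • v with hcdef
  have hc : ∀ t : ℝ, HasDerivAt c v t := by
    intro t
    have : HasDerivAt (fun s : ℝ => s • v) ((1:ℝ) • v) t := (hasDerivAt_id t).smul_const v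
    have h2 := this.const_add x
    simp only [one_smul] at h2
    exact h2
  have hc0 : c 0 = x := by simp [hcdef]
  have hmem : ∀ t ∈ Icc (0:ℝ) 1, c t ∈ U := fun t ht => hseg t ht
  set φ : ℝ → ℝ := fun t => L (c t) with hφdef
  set φ1 : ℝ → ℝ := fun t => f1 (c t) v with hφ1def
  set φ2 : ℝ → ℝ := fun t => f2 (c t) v v with hφ2def
  set φ3 : ℝ → ℝ := fun t => f3 (c t) v v v with hφ3def
  have hdφ : ∀ t ∈ Icc (0:ℝ) 1, HasDerivAt φ (φ1 t) t := fun t ht =>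
    (h1 _ (hmem t ht)).comp_hasDerivAt t (hc t)
  have hdφ1 : ∀ t ∈ Icc (0:ℝ) 1, HasDerivAt φ1 (φ2 t) t := by
    intro t ht
    have hA : HasDerivAt (fun s => f1 (c s)) (f2 (c t) v) t :=
      (h2 _ (hmem t ht)).comp_hasDerivAt t (hc t)
    have := hA.clm_apply (hasDerivAt_const t v)
    simpa using this
  have hdφ2 : ∀ t ∈ Icc (0:ℝ) 1, HasDerivAt φ2 (φ3 t) t := by
    intro t ht
    have hA : HasDerivAt (fun s => f2 (c s)) (f3 (c t) v) t :=
      HasFDerivAt.comp_hasDerivAt (𝕜 := ℝ) (F := E) (E := E →L[ℝ] E →L[ℝ] ℝ) t (h3 _ (hmem t ht)) (hc t)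
    have hB := hA.clm_apply (hasDerivAt_const t v)
    have hB' : HasDerivAt (fun s => f2 (c s) v) (f3 (c t) v v) t := by simpa using hB
    have := hB'.clm_apply (hasDerivAt_const t v)
    simpa using this
  have uds : UniqueDiffOn ℝ (Icc (0:ℝ) 1) := uniqueDiffOn_Icc zero_lt_one
  have eq1 : ∀ t ∈ Icc (0:ℝ) 1, iteratedDerivWithin 1 φ (Icc 0 1) t = φ1 t := by
    intro t ht
    rw [show (1:ℕ) = 0 + 1 from rfl, iteratedDerivWithin_succ]
    rw [derivWithin_congr (fun y _ => congrFun iteratedDerivWithin_zero y) (congrFun iteratedDerivWithin_zero t)]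
    exact ((hdφ t ht).hasDerivWithinAt).derivWithin (uds t ht)
  have eq2 : ∀ t ∈ Icc (0:ℝ) 1, iteratedDerivWithin 2 φ (Icc 0 1) t = φ2 t := by
    intro t ht
    rw [show (2:ℕ) = 1 + 1 from rfl, iteratedDerivWithin_succ]
    rw [derivWithin_congr eq1 (eq1 t ht)]
    exact ((hdφ1 t ht).hasDerivWithinAt).derivWithin (uds t ht)
  have eq3 : ∀ t ∈ Icc (0:ℝ) 1, iteratedDerivWithin 3 φ (Icc 0 1) t = φ3 t := by
    intro t ht
    rw [show (3:ℕ) = 2 + 1 from rfl, iteratedDerivWithin_succ]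
    rw [derivWithin_congr eq2 (eq2 t ht)]
    exact ((hdφ2 t ht).hasDerivWithinAt).derivWithin (uds t ht)
  have hφC : ContDiffOn ℝ 2 φ (Icc (0:ℝ) 1) := by
    have hcC : ContDiff ℝ 2 c := contDiff_const.add (contDiff_id.smul contDiff_const)
    exact (hL.of_le (by norm_num)).comp hcC.contDiffOn hmem
  have hdiff : DifferentiableOn ℝ (iteratedDerivWithin 2 φ (Icc 0 1)) (Ioo (0:ℝ) 1) := by
    refine DifferentiableOn.congr (f := φ2) ?_ (fun t ht => eq2 t (Ioo_subset_Icc_self ht))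
    exact fun t ht => ((hdφ2 t (Ioo_subset_Icc_self ht)).differentiableAt).differentiableWithinAt
  obtain ⟨x', hx', hlag⟩ : ∃ x' ∈ Ioo (0:ℝ) 1, φ 1 - taylorWithinEval φ 2 (Icc 0 1) 0 1 =
      iteratedDerivWithin (2 + 1) φ (Icc 0 1) x' * (1 - 0) ^ (2 + 1) / ((2 + 1).factorial : ℝ) := by
    have h := taylor_mean_remainder_lagrange (f := φ) (n := 2) (x₀ := 0) (x := 1) zero_ne_one
    rw [uIcc_of_le zero_le_one, uIoo_of_le zero_le_one] at h
    exact h (by exact_mod_cast hφC) hdiff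
  rw [taylor_within_apply] at hlag
  have hzero1 : φ1 0 = 0 := by
    show f1 (c 0) v = 0
    rw [hc0, hcrit]; rfl
  have hsum : ∑ k ∈ Finset.range 3, (((k.factorial : ℝ))⁻¹ * ((1:ℝ) - 0) ^ k) •
      iteratedDerivWithin k φ (Icc 0 1) 0 = L x + (1/2) * f2 x v v := by
    have h0 : (0:ℝ) ∈ Icc (0:ℝ) 1 := by norm_num
    rw [Finset.sum_range_succ, Finset.sum_range_succ, Finset.sum_range_one]
    rw [eq1 0 h0, eq2 0 h0, hzero1, congrFun iteratedDerivWithin_zero (0:ℝ)]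
    have hφ0 : φ 0 = L x := by show L (c 0) = L x; rw [hc0]
    have hφ20 : φ2 0 = f2 x v v := by show f2 (c 0) v v = _; rw [hc0]
    rw [hφ0, hφ20]
    norm_num [Nat.factorial]
  rw [hsum] at hlag
  rw [eq3 x' (Ioo_subset_Icc_self hx')] at hlag
  have hφ1v : φ 1 = L (x + v) := by simp [hφdef, hcdef]
  rw [hφ1v] at hlag
  have habs : L (x + v) - L x - 1/2 * f2 x v v
      = φ3 x' * ((1:ℝ)-0)^(2+1) / (((2+1).factorial : ℕ) : ℝ) := by linarith [hlag]
  have h6 : φ3 x' * ((1:ℝ)-0)^(2+1) / (((2+1).factorial : ℕ) : ℝ) = φ3 x' / 6 := by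
    norm_num [Nat.factorial]
  rw [habs, h6]
  have hb := hb3 (c x') (hmem x' (Ioo_subset_Icc_self hx')) v v v
  have habs2 : |φ3 x' / 6| = |φ3 x'| / 6 := by rw [abs_div]; norm_num
  rw [habs2]
  have hn : ν * (‖v‖ * ‖v‖ * ‖v‖) = ν * ‖v‖ ^ 3 := by ring
  rw [hn] at hb
  linarith [abs_nonneg (φ3 x')]


open MeasureTheory

/-- At a critical point, the average-direction sharpness equals `(ρ²/(2D)) Tr(∇²L(x))`
up to an error of `(ν/6) ρ³`, for all sufficiently small `ρ`. -/
theorem average_direction_sharpness_taylor {D : ℕ} (hD : 0 < D)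
    (L : EuclideanSpace ℝ (Fin D) → ℝ)
    (B : Set (EuclideanSpace ℝ (Fin D))) (hBconv : Convex ℝ B) (hBcomp : IsCompact B)
    (ν : ℝ) (hL : ContDiffOn ℝ 3 L B)
    (hν : ∀ y ∈ B, ‖iteratedFDerivWithin ℝ 3 L B y‖ ≤ ν)
    (x : EuclideanSpace ℝ (Fin D)) (hx : x ∈ interior B)
    (hcrit : fderivWithin ℝ L B x = 0) :
    ∃ ρ₀ > 0, ∀ ρ : ℝ, 0 < ρ → ρ < ρ₀ →
      |(∫ g : Fin D → ℝ,
          L (x + ρ • (‖(EuclideanSpace.equiv (Fin D) ℝ).symm g‖⁻¹ •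
              (EuclideanSpace.equiv (Fin D) ℝ).symm g))
          ∂(Measure.pi fun _ : Fin D => ProbabilityTheory.gaussianReal 0 1))
        - L x
        - ρ ^ 2 / (2 * (D : ℝ)) *
          ∑ i : Fin D, iteratedFDerivWithin ℝ 2 L B x
            ![EuclideanSpace.single i (1 : ℝ), EuclideanSpace.single i (1 : ℝ)]|
        ≤ ν / 6 * ρ ^ 3 := by
  classical
  have hxB : x ∈ B := interior_subset hx
  have hν0 : (0:ℝ) ≤ ν := le_trans (norm_nonneg _) (hν x hxB)
  have hUopen : IsOpen (interior B) := isOpen_interior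
  have hL' : ContDiffOn ℝ 3 L (interior B) := hL.mono interior_subset
  have hBnhds : ∀ y ∈ interior B, B ∈ nhds y := fun y hy =>
    mem_nhds_iff.mpr ⟨interior B, interior_subset, isOpen_interior, hy⟩
  have hiter : ∀ (n : ℕ), ∀ y ∈ interior B,
      iteratedFDerivWithin ℝ n L B y = iteratedFDeriv ℝ n L y := by
    intro n y hy
    rw [iteratedFDerivWithin_congr_set (Filter.eventuallyEq_univ.mpr (hBnhds y hy)) n,
      iteratedFDerivWithin_univ]
  have hν' : ∀ y ∈ interior B, ‖iteratedFDeriv ℝ 3 L y‖ ≤ ν := fun y hy => by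
    rw [← hiter 3 y hy]; exact hν y (interior_subset hy)
  have hcrit' : fderiv ℝ L x = 0 := by
    rw [← fderivWithin_of_mem_nhds (hBnhds x hx)]; exact hcrit
  obtain ⟨ε, hε, hball⟩ := Metric.isOpen_iff.mp isOpen_interior x hx
  refine ⟨ε/2, by linarith, ?_⟩
  intro ρ hρ0 hρε
  have hclos : Metric.closedBall x ρ ⊆ interior B :=
    le_trans (Metric.closedBall_subset_ball (by linarith)) hball
  set A := fderiv ℝ (fderiv ℝ L) x with hAdef
  -- pointwise Taylor estimate
  have htay : ∀ v : EuclideanSpace ℝ (Fin D), ‖v‖ ≤ ρ →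
      |L (x + v) - L x - (1/2) * A v v| ≤ ν / 6 * ρ ^ 3 := by
    intro v hv
    have hseg : ∀ t : ℝ, t ∈ Set.Icc (0:ℝ) 1 → x + t • v ∈ interior B := by
      intro t ht
      apply hclos
      rw [Metric.mem_closedBall, dist_eq_norm]
      have h1 : x + t • v - x = t • v := by abel
      rw [h1, norm_smul, Real.norm_eq_abs, abs_of_nonneg ht.1]
      calc t * ‖v‖ ≤ 1 * ρ :=
            mul_le_mul ht.2 hv (norm_nonneg _) zero_le_one
        _ = ρ := one_mul ρ
    refine (taylor_third_order hUopen hL' hν' hcrit' hseg).trans ?_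
    have h3 : ‖v‖^3 ≤ ρ^3 := pow_le_pow_left₀ (norm_nonneg _) hv 3
    exact mul_le_mul_of_nonneg_left h3 (by positivity)
  -- notation
  set u : (Fin D → ℝ) → EuclideanSpace ℝ (Fin D) := fun g =>
    ‖(EuclideanSpace.equiv (Fin D) ℝ).symm g‖⁻¹ • (EuclideanSpace.equiv (Fin D) ℝ).symm g
    with hudef
  have hwn : ∀ g : Fin D → ℝ, ‖(EuclideanSpace.equiv (Fin D) ℝ).symm g‖ = nrmD D g := by
    intro g
    rw [EuclideanSpace.norm_eq]; unfold nrmD; congr 1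
    refine Finset.sum_congr rfl fun k _ => ?_
    rw [Real.norm_eq_abs, sq_abs]; rfl
  have huk : ∀ (g : Fin D → ℝ) (k : Fin D), u g k = (nrmD D g)⁻¹ * g k := by
    intro g k
    show ‖(EuclideanSpace.equiv (Fin D) ℝ).symm g‖⁻¹ * g k = _
    rw [hwn]
  have hun : ∀ g : Fin D → ℝ, ‖u g‖ ≤ 1 := by
    intro g
    show ‖‖(EuclideanSpace.equiv (Fin D) ℝ).symm g‖⁻¹ •
      (EuclideanSpace.equiv (Fin D) ℝ).symm g‖ ≤ 1
    rw [norm_smul, norm_inv, norm_norm]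
    rcases eq_or_ne ‖(EuclideanSpace.equiv (Fin D) ℝ).symm g‖ 0 with h | h
    · rw [h]; norm_num
    · rw [inv_mul_cancel₀ h]
  have hmaps : ∀ g : Fin D → ℝ, x + ρ • u g ∈ B := by
    intro g
    apply interior_subset
    apply hclos
    rw [Metric.mem_closedBall, dist_eq_norm]
    have h1 : x + ρ • u g - x = ρ • u g := by abel
    rw [h1, norm_smul, Real.norm_eq_abs, abs_of_nonneg hρ0.le]
    calc ρ * ‖u g‖ ≤ ρ * 1 := mul_le_mul_of_nonneg_left (hun g) hρ0.le
      _ = ρ := mul_one ρ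
  -- expansion of the quadratic form
  have hAexp : ∀ g : Fin D → ℝ, A (u g) (u g) =
      ∑ i, ∑ j, A (EuclideanSpace.single i (1:ℝ)) (EuclideanSpace.single j (1:ℝ)) * qD D i j g := by
    intro g
    have hexp : u g = ∑ k, ((nrmD D g)⁻¹ * g k) • EuclideanSpace.single k (1:ℝ) := by
      ext k
      have hs : (∑ j, ((nrmD D g)⁻¹ * g j) • EuclideanSpace.single j (1:ℝ)) k
          = ∑ j, (((nrmD D g)⁻¹ * g j) • EuclideanSpace.single j (1:ℝ)) k :=
        by rw [WithLp.ofLp_sum]; exact Finset.sum_apply k Finset.univ _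
      rw [hs, huk g k]
      simp [EuclideanSpace.single_apply]
    rw [hexp]
    simp only [map_sum, ContinuousLinearMap.sum_apply, _root_.map_smul,
      ContinuousLinearMap.smul_apply, smul_eq_mul, Finset.mul_sum]
    rw [Finset.sum_comm]
    refine Finset.sum_congr rfl fun i _ => Finset.sum_congr rfl fun j _ => ?_
    unfold qD
    ring
  -- integrability
  have humeas : Measurable u := by
    have hw : Measurable (fun g : Fin D → ℝ => (EuclideanSpace.equiv (Fin D) ℝ).symm g) :=
      (EuclideanSpace.equiv (Fin D) ℝ).symm.continuous.measurable
    exact ((continuous_norm.comp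
      (EuclideanSpace.equiv (Fin D) ℝ).symm.continuous).measurable.inv).smul hw
  have hφmeas : Measurable fun g : Fin D → ℝ => L (x + ρ • u g) := by
    have h1 : Measurable fun g : Fin D → ℝ => x + ρ • u g :=
      (humeas.const_smul ρ).const_add x
    have h2 : Continuous (B.restrict L) := hL.continuousOn.restrict
    exact h2.measurable.comp (h1.subtype_mk (h := hmaps))
  obtain ⟨K, hK⟩ := hBcomp.exists_bound_of_continuousOn hL.continuousOn
  have hφint : Integrable (fun g : Fin D → ℝ => L (x + ρ • u g)) (gammaD D) :=
    (integrable_const K).mono' hφmeas.aestronglyMeasurable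
      (Filter.Eventually.of_forall fun g => hK _ (hmaps g))
  have hAint : Integrable (fun g : Fin D → ℝ => A (u g) (u g)) (gammaD D) := by
    rw [funext hAexp]
    refine integrable_finset_sum _ fun i _ => integrable_finset_sum _ fun j _ => ?_
    exact (qD_integrable D i j).const_mul _
  have hcov : ∀ i j : Fin D, ∫ g, qD D i j g ∂(gammaD D) = if i = j then 1/(D:ℝ) else 0 := by
    intro i j
    by_cases h : i = j
    · subst h; simp [qD_int_diag D hD i]
    · simp [h, qD_int_offdiag D i j h]
  have hAval : ∫ g, A (u g) (u g) ∂(gammaD D) =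
      (1/(D:ℝ)) * ∑ i, A (EuclideanSpace.single i (1:ℝ)) (EuclideanSpace.single i (1:ℝ)) := by
    rw [funext hAexp]
    rw [integral_finset_sum _ (fun i _ => integrable_finset_sum _ fun j _ =>
      (qD_integrable D i j).const_mul _)]
    rw [Finset.sum_congr rfl fun i _ => integral_finset_sum _ fun j _ =>
      (qD_integrable D i j).const_mul _]
    rw [Finset.sum_congr rfl fun i _ => Finset.sum_congr rfl fun j _ =>
      integral_const_mul _ _]
    rw [Finset.sum_congr rfl fun i _ => Finset.sum_congr rfl fun j _ => by rw [hcov i j]]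
    rw [Finset.mul_sum]
    refine Finset.sum_congr rfl fun i _ => ?_
    simp [mul_ite, mul_zero, Finset.sum_ite_eq, mul_comm]
  -- the trace term
  have hS : ∑ i : Fin D, iteratedFDerivWithin ℝ 2 L B x
      ![EuclideanSpace.single i (1 : ℝ), EuclideanSpace.single i (1 : ℝ)]
      = ∑ i, A (EuclideanSpace.single i (1:ℝ)) (EuclideanSpace.single i (1:ℝ)) := by
    refine Finset.sum_congr rfl fun i _ => ?_
    rw [hiter 2 x hx, iteratedFDeriv_two_apply]
    simp [hAdef]
  -- rewrite the goal integral
  have hint : (∫ g : Fin D → ℝ,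
          L (x + ρ • (‖(EuclideanSpace.equiv (Fin D) ℝ).symm g‖⁻¹ •
              (EuclideanSpace.equiv (Fin D) ℝ).symm g))
          ∂(Measure.pi fun _ : Fin D => ProbabilityTheory.gaussianReal 0 1))
      = ∫ g, L (x + ρ • u g) ∂(gammaD D) := rfl
  rw [hint, hS]
  have hDne : (D:ℝ) ≠ 0 := Nat.cast_ne_zero.mpr hD.ne'
  have hsplit : (∫ g, L (x + ρ • u g) ∂(gammaD D)) - L x
      - ρ^2/(2*(D:ℝ)) * ∑ i, A (EuclideanSpace.single i (1:ℝ)) (EuclideanSpace.single i (1:ℝ))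
      = ∫ g, (L (x + ρ • u g) - L x - ρ^2/2 * A (u g) (u g)) ∂(gammaD D) := by
    have h1 : ∫ g, ((L (x + ρ • u g) - L x) - ρ^2/2 * (A (u g)) (u g)) ∂(gammaD D)
        = (∫ g, (L (x + ρ • u g) - L x) ∂(gammaD D))
          - ∫ g, ρ^2/2 * (A (u g)) (u g) ∂(gammaD D) :=
      integral_sub (hφint.sub (integrable_const _)) (hAint.const_mul _)
    have h2 : ∫ g, (L (x + ρ • u g) - L x) ∂(gammaD D)
        = (∫ g, L (x + ρ • u g) ∂(gammaD D)) - L x := by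
      rw [integral_sub hφint (integrable_const _), integral_const]
      simp [measure_univ]
    have h3 : ∫ g, ρ^2/2 * (A (u g)) (u g) ∂(gammaD D)
        = ρ^2/2 * (1/(D:ℝ) * ∑ i, A (EuclideanSpace.single i (1:ℝ))
            (EuclideanSpace.single i (1:ℝ))) := by
      rw [integral_const_mul, hAval]
    rw [h1, h2, h3]
    field_simp
  rw [hsplit]
  have hptw : ∀ g : Fin D → ℝ,
      ‖L (x + ρ • u g) - L x - ρ^2/2 * A (u g) (u g)‖ ≤ ν / 6 * ρ ^ 3 := by
    intro g
    have hv : ‖ρ • u g‖ ≤ ρ := by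
      rw [norm_smul, Real.norm_eq_abs, abs_of_nonneg hρ0.le]
      calc ρ * ‖u g‖ ≤ ρ * 1 := mul_le_mul_of_nonneg_left (hun g) hρ0.le
        _ = ρ := mul_one ρ
    have h := htay (ρ • u g) hv
    have hAs : A (ρ • u g) (ρ • u g) = ρ^2 * (A (u g) (u g)) := by
      have e1 := _root_.map_smul A ρ (u g)
      have e2 := _root_.map_smul (A (u g)) ρ (u g)
      rw [e1, ContinuousLinearMap.smul_apply, e2, smul_eq_mul, smul_eq_mul]
      ring
    rw [hAs] at h
    rw [Real.norm_eq_abs]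
    have heq : L (x + ρ • u g) - L x - ρ^2/2 * A (u g) (u g)
        = L (x + ρ • u g) - L x - 1/2 * (ρ^2 * (A (u g) (u g))) := by ring
    rw [heq]
    exact h
  have hb := norm_integral_le_of_norm_le_const (μ := gammaD D)
    (Filter.Eventually.of_forall hptw)
  rw [Real.norm_eq_abs] at hb
  simpa [measure_univ] using hb
end
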